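/- arXiv:2202.11687 — 5 statements merged into one kernel-verified Lean document; each statement's English description precedes it below -/
import Mathlib

section
/- There exist constants C > 0 and M > 0 such that for every real y ≥ M and every real t ≥ 0, one has |(1 − 2/(y+1))^{2⌊ty⌋} − e^{−4t}| ≤ C·e^{−t/C}/y, where ⌊ty⌋ denotes the greatest integer not exceeding ty. -/
set_option maxHeartbeats 1000000


open Real

/-- the elementary estimate of Lemma 2.1:
`|(1 − 2/(y+1))^{2⌊ty⌋} − e^{−4t}| ≤ C e^{−t/C} / y` for `y ≥ M`, `t ≥ 0`.
Here `⌊ty⌋` is the greatest integer not exceeding `ty` (a natural number, since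
`ty ≥ 0`), and the power is the natural-number power. -/
theorem stmt6 :
    ∃ C > (0 : ℝ), ∃ M > (0 : ℝ), ∀ y : ℝ, M ≤ y → ∀ t : ℝ, 0 ≤ t →
      |(1 - 2 / (y + 1)) ^ (2 * Nat.floor (t * y)) - Real.exp (-(4 * t))| ≤
        C * Real.exp (-(t / C)) / y := by
  refine ⟨20, by norm_num, 4, by norm_num, ?_⟩
  intro y hy t ht
  have hy0 : (0:ℝ) < y := by linarith
  have hy1 : (0:ℝ) < y - 1 := by linarith
  have hyp1 : (0:ℝ) < y + 1 := by linarith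
  set n : ℕ := Nat.floor (t * y) with hn
  have hn_le : (n:ℝ) ≤ t * y := Nat.floor_le (by positivity)
  have hn_gt : t * y - 1 < (n:ℝ) := by
    have := Nat.lt_floor_add_one (t * y)
    push_cast at this ⊢
    linarith
  have ha : (1 - 2/(y+1)) = (y-1)/(y+1) := by field_simp; ring
  have ha0 : (0:ℝ) < (y-1)/(y+1) := by positivity
  set a : ℝ := (y-1)/(y+1) with haa
  -- log upper bound
  have hlog_up : Real.log a ≤ -(2/y) + 2/y^2 := by
    have h1 : Real.log a ≤ a - 1 := Real.log_le_sub_one_of_pos ha0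
    have h2 : a - 1 = -(2/(y+1)) := by rw [haa]; field_simp; ring
    have h3 : -(2/(y+1)) = -(2/y) + 2/(y*(y+1)) := by field_simp; ring
    have h4 : 2/(y*(y+1)) ≤ 2/y^2 := by
      apply div_le_div_of_nonneg_left (by norm_num) (by positivity)
      nlinarith
    linarith
  -- log lower bound
  have hlog_lo : -(2/y) - 3/y^2 ≤ Real.log a := by
    have h1 : -Real.log a ≤ 2/(y-1) := by
      have e0 : (0:ℝ) < (y+1)/(y-1) := by positivity
      have e1 : Real.log ((y+1)/(y-1)) ≤ (y+1)/(y-1) - 1 := Real.log_le_sub_one_of_pos e0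
      have e2 : (y+1)/(y-1) - 1 = 2/(y-1) := by field_simp; ring
      have e3 : -Real.log a = Real.log ((y+1)/(y-1)) := by
        rw [haa, ← Real.log_inv, inv_div]
      linarith
    have h4 : 2/(y-1) ≤ 2/y + 3/y^2 := by
      rw [div_add_div _ _ (by positivity) (by positivity), div_le_div_iff₀ hy1 (by positivity)]
      nlinarith
    linarith
  -- rewrite power as exp
  have hpow : (1 - 2/(y+1)) ^ (2*n) = Real.exp ((2*n : ℝ) * Real.log a) := by
    have hc : ((2*n:ℕ):ℝ) = (2*n : ℝ) := by push_cast; ring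
    rw [ha, ← hc, ← Real.log_pow, Real.exp_log (pow_pos ha0 _)]
  set A : ℝ := (2*n : ℝ) * Real.log a with hA
  -- bounds on A
  have hlogneg : Real.log a < 0 := by
    apply Real.log_neg ha0
    rw [haa, div_lt_one hyp1]; linarith
  have hA_up : A ≤ -(4*t) + (4*t + 4)/y := by
    have e3 : -(2/y) + 2/y^2 ≤ 0 := by
      have h : 2/y^2 ≤ 2/y := by
        apply div_le_div_of_nonneg_left (by norm_num) hy0
        nlinarith
      linarith
    have e1 : A ≤ 2 * (n:ℝ) * (-(2/y) + 2/y^2) :=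
      mul_le_mul_of_nonneg_left hlog_up (by positivity)
    have e2 : 2 * (t*y) - 2 ≤ 2 * (n:ℝ) := by linarith
    have e4 : 2 * (n:ℝ) * (-(2/y) + 2/y^2) ≤ (2*(t*y) - 2) * (-(2/y) + 2/y^2) :=
      mul_le_mul_of_nonpos_right e2 e3
    have heq : (2*(t*y) - 2) * (-(2/y) + 2/y^2) = -(4*t) + (4*t+4)/y - 4/y^2 := by
      field_simp; ring
    have e5 : (0:ℝ) ≤ 4/y^2 := by positivity
    linarith
  have hA_lo : -(4*t) - (6*t)/y ≤ A := by
    have e3 : -(2/y) - 3/y^2 ≤ 0 := by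
      have h1 : (0:ℝ) ≤ 2/y := by positivity
      have h2 : (0:ℝ) ≤ 3/y^2 := by positivity
      linarith
    have e1 : 2 * (n:ℝ) * (-(2/y) - 3/y^2) ≤ A :=
      mul_le_mul_of_nonneg_left hlog_lo (by positivity)
    have e2 : 2 * (n:ℝ) ≤ 2 * (t*y) := by linarith
    have e4 : (2*(t*y)) * (-(2/y) - 3/y^2) ≤ 2 * (n:ℝ) * (-(2/y) - 3/y^2) :=
      mul_le_mul_of_nonpos_right e2 e3
    have heq : (2*(t*y)) * (-(2/y) - 3/y^2) = -(4*t) - (6*t)/y := by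
      field_simp; ring
    linarith
  rw [hpow]
  set B : ℝ := -(4*t) with hB
  clear_value n a A B
  have hElo : -((6*t+4)/y) ≤ A - B := by
    have h0 : (0:ℝ) ≤ 4/y := by positivity
    have h6 : (6*t+4)/y = (6*t)/y + 4/y := by ring
    linarith
  have hEhi : A - B ≤ (6*t+4)/y := by
    have h6 : (4*t+4)/y ≤ (6*t+4)/y := by gcongr; linarith
    linarith
  have hmaxA : A ≤ -(3*t) + 1 := by
    have h : (4*t+4)/y ≤ t + 1 := by
      rw [div_le_iff₀ hy0]; nlinarith
    linarith
  have hmaxB : B ≤ -(3*t) + 1 := by rw [hB]; linarith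
  have hexp : ∀ u v : ℝ, u ≤ v → Real.exp v - Real.exp u ≤ Real.exp v * (v - u) := by
    intro u v huv
    have h1 := Real.add_one_le_exp (u - v)
    have h2 : Real.exp u = Real.exp v * Real.exp (u - v) := by
      rw [← Real.exp_add]; ring_nf
    nlinarith [Real.exp_pos v]
  have hdiff : |Real.exp A - Real.exp B| ≤ Real.exp (-(3*t) + 1) * ((6*t+4)/y) := by
    rcases le_total A B with h | h
    · rw [abs_of_nonpos (sub_nonpos.2 (Real.exp_le_exp.2 h))]
      have h1 := hexp A B h
      have hm : Real.exp B ≤ Real.exp (-(3*t)+1) := Real.exp_le_exp.2 hmaxB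
      have h2 : Real.exp B * (B - A) ≤ Real.exp (-(3*t)+1) * ((6*t+4)/y) :=
        mul_le_mul hm (by linarith) (by linarith) (Real.exp_pos _).le
      linarith only [h1, h2]
    · rw [abs_of_nonneg (sub_nonneg.2 (Real.exp_le_exp.2 h))]
      have h1 := hexp B A h
      have hm : Real.exp A ≤ Real.exp (-(3*t)+1) := Real.exp_le_exp.2 hmaxA
      have h2 : Real.exp A * (A - B) ≤ Real.exp (-(3*t)+1) * ((6*t+4)/y) :=
        mul_le_mul hm (by linarith) (by linarith) (Real.exp_pos _).le
      linarith only [h1, h2]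
  have hfin : Real.exp (-(3*t) + 1) * (6*t+4) ≤ 20 * Real.exp (-(t/20)) := by
    have h1 : 6*t+4 ≤ 7 * Real.exp t := by nlinarith [Real.add_one_le_exp t]
    have h2 : Real.exp (-(3*t)+1) * Real.exp t = Real.exp (-(2*t)+1) := by
      rw [← Real.exp_add]; ring_nf
    have h3 : Real.exp (-(2*t)+1) ≤ Real.exp 1 * Real.exp (-(t/20)) := by
      rw [← Real.exp_add]; apply Real.exp_le_exp.2; linarith
    have h4 : Real.exp 1 ≤ 2.7182818286 := le_of_lt Real.exp_one_lt_d9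
    calc Real.exp (-(3*t)+1) * (6*t+4) ≤ Real.exp (-(3*t)+1) * (7 * Real.exp t) :=
          mul_le_mul_of_nonneg_left h1 (Real.exp_pos _).le
      _ = 7 * (Real.exp (-(3*t)+1) * Real.exp t) := by ring
      _ = 7 * Real.exp (-(2*t)+1) := by rw [h2]
      _ ≤ 7 * (Real.exp 1 * Real.exp (-(t/20))) := by
          apply mul_le_mul_of_nonneg_left h3 (by norm_num)
      _ ≤ 20 * Real.exp (-(t/20)) := by nlinarith [Real.exp_pos (-(t/20))]
  calc |Real.exp A - Real.exp B| ≤ Real.exp (-(3*t) + 1) * ((6*t+4)/y) := hdiff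
    _ = (Real.exp (-(3*t) + 1) * (6*t+4))/y := by ring
    _ ≤ 20 * Real.exp (-(t/20)) / y := by gcongr
end

section
/- Fix α>0 and for a natural number n set k_n^{(α)} = Γ(α+n+1)/(Γ(α)·Γ(n+1)). Then there exists a constant C > 0 such that for every real y ≥ 0: if y ∈ [0,1) then |k_{⌊y⌋}^{(α)} − y^α/Γ(α)| ≤ C, and if y ≥ 1 then |k_{⌊y⌋}^{(α)} − y^α/Γ(α)| ≤ C·y^{α−1}; here ⌊y⌋ denotes the greatest integer not exceeding y. -/
/-!
Since `log ∘ Γ` is convex and `log Γ (x + 1) - log Γ x = log x`, comparing the slope of `log ∘ Γ`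
on `[x, x + α]` with its slopes on `[x - 1, x]` and `[x + α, x + α + 1]` squeezes
`Γ(n + 1 + α) / Γ(n + 1)` between `n ^ α` and `(n + 1 + α) ^ α`. For `n = ⌊y⌋` the power `y ^ α`
lies in the same interval, whose length is `O(y ^ (α - 1))` by the mean value theorem.
-/

open Real Set

namespace Real

theorem log_Gamma_add_one {x : ℝ} (hx : 0 < x) :
    log (Gamma (x + 1)) = log x + log (Gamma x) := by
  rw [Gamma_add_one hx.ne', log_mul hx.ne' (Gamma_pos_of_pos hx).ne']

theorem log_Gamma_add_sub_log_Gamma_le {x a : ℝ} (hx : 0 < x) (ha : 0 < a) :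
    log (Gamma (x + a)) - log (Gamma x) ≤ a * log (x + a) := by
  have h := convexOn_log_Gamma.slope_mono_adjacent (x := x) (y := x + a) (z := x + a + 1)
    hx (by simp only [mem_Ioi]; linarith) (by linarith) (by linarith)
  simp only [Function.comp_apply, log_Gamma_add_one (by linarith : 0 < x + a),
    add_sub_cancel_left, add_sub_cancel_right, div_one] at h
  rwa [div_le_iff₀ ha, mul_comm] at h

theorem mul_log_sub_one_le_log_Gamma_add_sub_log_Gamma {x a : ℝ} (hx : 1 < x) (ha : 0 < a) :
    a * log (x - 1) ≤ log (Gamma (x + a)) - log (Gamma x) := by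
  have h := convexOn_log_Gamma.slope_mono_adjacent (x := x - 1) (y := x) (z := x + a)
    (by simp only [mem_Ioi]; linarith) (by simp only [mem_Ioi]; linarith) (by linarith)
    (by linarith)
  have hstep := log_Gamma_add_one (by linarith : 0 < x - 1)
  rw [sub_add_cancel] at hstep
  simp only [Function.comp_apply, hstep, sub_sub_cancel, div_one, add_sub_cancel_left] at h
  rw [le_div_iff₀ ha] at h
  linarith

theorem Gamma_add_div_Gamma_le_rpow {x a : ℝ} (hx : 0 < x) (ha : 0 < a) :
    Gamma (x + a) / Gamma x ≤ (x + a) ^ a := by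
  have hxa : 0 < x + a := by linarith
  rw [← log_le_log_iff (div_pos (Gamma_pos_of_pos hxa) (Gamma_pos_of_pos hx))
    (rpow_pos_of_pos hxa a), log_div (Gamma_pos_of_pos hxa).ne' (Gamma_pos_of_pos hx).ne',
    log_rpow hxa]
  exact log_Gamma_add_sub_log_Gamma_le hx ha

theorem rpow_le_Gamma_add_div_Gamma {x a : ℝ} (hx : 1 < x) (ha : 0 < a) :
    (x - 1) ^ a ≤ Gamma (x + a) / Gamma x := by
  have hx0 : 0 < x := by linarith
  have hxa : 0 < x + a := by linarith
  rw [← log_le_log_iff (rpow_pos_of_pos (by linarith) a)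
    (div_pos (Gamma_pos_of_pos hxa) (Gamma_pos_of_pos hx0)),
    log_div (Gamma_pos_of_pos hxa).ne' (Gamma_pos_of_pos hx0).ne', log_rpow (by linarith)]
  exact mul_log_sub_one_le_log_Gamma_add_sub_log_Gamma hx ha

theorem rpow_le_rpow_abs_mul_rpow {c y t q : ℝ} (hc : 1 ≤ c) (ht : 0 < t)
    (hyt : y ≤ c * t) (hty : t ≤ c * y) : t ^ q ≤ c ^ |q| * y ^ q := by
  have hc0 : 0 < c := by linarith
  have hy : 0 < y := pos_of_mul_pos_right (ht.trans_le hty) hc0.le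
  rcases le_or_gt 0 q with hq | hq
  · calc t ^ q ≤ (c * y) ^ q := rpow_le_rpow ht.le hty hq
      _ = c ^ |q| * y ^ q := by
        rw [abs_of_nonneg hq, mul_rpow hc0.le hy.le]
  · have hyc : c⁻¹ * y ≤ t := by rw [inv_mul_le_iff₀ hc0]; exact hyt
    calc t ^ q ≤ (c⁻¹ * y) ^ q := rpow_le_rpow_of_nonpos (by positivity) hyc hq.le
      _ = c ^ |q| * y ^ q := by
        rw [abs_of_neg hq, mul_rpow (inv_nonneg.2 hc0.le) hy.le, inv_rpow hc0.le,
          rpow_neg hc0.le]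

theorem rpow_sub_rpow_le_mul_sub {p a b M : ℝ} (hp : 0 ≤ p) (ha : 0 < a) (hab : a ≤ b)
    (hM : ∀ t ∈ Ioo a b, t ^ (p - 1) ≤ M) : b ^ p - a ^ p ≤ p * M * (b - a) := by
  have hne : ∀ t ∈ Icc a b, t ≠ 0 := fun t ht => (ha.trans_le ht.1).ne'
  refine (convex_Icc a b).image_sub_le_mul_sub_of_deriv_le
    (fun t ht => (hasDerivAt_rpow_const (Or.inl (hne t ht))).continuousAt.continuousWithinAt)
    (fun t ht => (hasDerivAt_rpow_const (Or.inl (hne t (interior_subset ht)))).differentiableAt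
      |>.differentiableWithinAt) (fun t ht => ?_) a (left_mem_Icc.2 hab) b (right_mem_Icc.2 hab) hab
  rw [interior_Icc] at ht
  rw [deriv_rpow_const]
  exact mul_le_mul_of_nonneg_left (hM t ht) hp

theorem abs_Gamma_floor_add_div_Gamma_sub_rpow_le {α y : ℝ} (hα : 0 < α) (hy : 1 ≤ y) :
    |Gamma (⌊y⌋₊ + 1 + α) / Gamma (⌊y⌋₊ + 1) - y ^ α|
      ≤ α * (1 + α) * (2 + α) ^ |α - 1| * y ^ (α - 1) := by
  set n : ℕ := ⌊y⌋₊
  have hn : (1 : ℝ) ≤ n := by exact_mod_cast Nat.le_floor (by exact_mod_cast hy)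
  have hny : (n : ℝ) ≤ y := Nat.floor_le (by linarith)
  have hyn : y < n + 1 := Nat.lt_floor_add_one y
  have hlow : (n : ℝ) ^ α ≤ Gamma (n + 1 + α) / Gamma (n + 1) := by
    simpa using rpow_le_Gamma_add_div_Gamma (x := n + 1) (by linarith) hα
  have hup : Gamma (n + 1 + α) / Gamma (n + 1) ≤ (n + 1 + α) ^ α :=
    Gamma_add_div_Gamma_le_rpow (by linarith) hα
  have hderiv : ∀ t ∈ Ioo (n : ℝ) (n + 1 + α), t ^ (α - 1) ≤ (2 + α) ^ |α - 1| * y ^ (α - 1) :=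
    fun t ht => rpow_le_rpow_abs_mul_rpow (by linarith) (by linarith [ht.1])
      (by nlinarith [ht.1]) (by nlinarith [ht.2])
  calc |Gamma (n + 1 + α) / Gamma (n + 1) - y ^ α|
      ≤ (n + 1 + α) ^ α - (n : ℝ) ^ α :=
        abs_sub_le_of_le_of_le hlow hup (rpow_le_rpow (by linarith) hny hα.le)
          (rpow_le_rpow (by linarith) (by linarith) hα.le)
    _ ≤ α * ((2 + α) ^ |α - 1| * y ^ (α - 1)) * (n + 1 + α - n) :=
        rpow_sub_rpow_le_mul_sub hα.le (by linarith) (by linarith) hderiv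
    _ = α * (1 + α) * (2 + α) ^ |α - 1| * y ^ (α - 1) := by ring

end Real

/-- the Stirling estimate of Lemma 2.2:
with `k_n = Γ(α+n+1)/(Γ(α)Γ(n+1))`, one has `|k_{⌊y⌋} − y^α/Γ(α)| ≤ C` for
`y ∈ [0,1)` and `|k_{⌊y⌋} − y^α/Γ(α)| ≤ C·y^{α−1}` for `y ≥ 1`. -/
theorem stmt7 (α : ℝ) (hα : 0 < α)
    (k : ℕ → ℝ)
    (hk : ∀ n : ℕ, k n = Real.Gamma (α + n + 1) / (Real.Gamma α * Real.Gamma (n + 1))) :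
    ∃ C > (0 : ℝ), ∀ y : ℝ, 0 ≤ y →
      (y < 1 → |k (Nat.floor y) - y ^ α / Real.Gamma α| ≤ C) ∧
      (1 ≤ y → |k (Nat.floor y) - y ^ α / Real.Gamma α| ≤ C * y ^ (α - 1)) := by
  have hΓ : 0 < Gamma α := Gamma_pos_of_pos hα
  have hk' : ∀ n : ℕ, k n = Gamma (n + 1 + α) / Gamma (n + 1) / Gamma α := fun n => by
    rw [hk, div_div, mul_comm (Gamma α)]
    congr 2
    ring
  refine ⟨max (α + 1 / Gamma α) (α * (1 + α) * (2 + α) ^ |α - 1| / Gamma α),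
    lt_max_of_lt_left (by positivity), fun y hy => ⟨fun hy1 => ?_, fun hy1 => ?_⟩⟩
  · have hk0 : k 0 = α := by
      rw [hk', Nat.cast_zero, zero_add, Gamma_one, div_one, add_comm,
        Gamma_add_one hα.ne', mul_div_cancel_right₀ _ hΓ.ne']
    have hyα : y ^ α / Gamma α ≤ 1 / Gamma α :=
      div_le_div_of_nonneg_right (rpow_le_one hy hy1.le hα.le) hΓ.le
    rw [Nat.floor_eq_zero.2 hy1, hk0]
    refine le_max_of_le_left (abs_sub_le_iff.2 ⟨?_, ?_⟩) <;>
      linarith [div_nonneg (rpow_nonneg hy α) hΓ.le, one_div_pos.2 hΓ]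
  · rw [hk', ← sub_div, abs_div, abs_of_pos hΓ, div_le_iff₀ hΓ]
    calc _ ≤ α * (1 + α) * (2 + α) ^ |α - 1| * y ^ (α - 1) :=
          abs_Gamma_floor_add_div_Gamma_sub_rpow_le hα hy1
      _ = α * (1 + α) * (2 + α) ^ |α - 1| / Gamma α * y ^ (α - 1) * Gamma α := by
          field_simp
      _ ≤ _ := by gcongr; exact le_max_right _ _
end

section
/- Let f: ℝ → ℝ be bounded, measurable and compactly supported. Then for every R > 0 one has the exact identity ∑_{n=0}^∞ E[f(ρ_n − R)] = 2·R·∫_{−R}^{+∞} f(x) dx + 2·∫_{−R}^{+∞} x·f(x) dx. In particular, ∑_{n=0}^∞ E[f(ρ_n − R)] = 2·R·∫_ℝ f(x) dx + O(1) as R → +∞. -/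
/-!
Summing the densities of the moduli, `∑ₙ 2 r^(2n+1) e^(-r²) / n! = 2 r e^(-r²) e^(r²) = 2 r`
for `r ≥ 0`: the radial intensity of the Ginibre ensemble is exactly `2 r 𝟙[r ≥ 0]`.
Hence `∑ₙ E[f(ρₙ - R)] = ∫_{r ≥ 0} 2 r f(r - R) dr = ∫_{x > -R} 2 (x + R) f(x) dx`, the interchange
of sum and integral being justified by dominated convergence with the dominating function
`2 r 𝟙[r ≥ 0] |f(r - R)|`. Once `-R` lies below the support of `f`, the two integrals over
`(-R, ∞)` are integrals over `ℝ`, so the error term `2 ∫ x f(x) dx` does not depend on `R`.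
-/

open MeasureTheory ProbabilityTheory Filter Real Set Nat

noncomputable def ginibreRadialDensity (n : ℕ) (r : ℝ) : ℝ :=
  (Ici (0 : ℝ)).indicator (fun r => 2 * r ^ (2 * n + 1) * exp (-r ^ 2) / (n ! : ℝ)) r

lemma ginibreRadialDensity_nonneg (n : ℕ) (r : ℝ) : 0 ≤ ginibreRadialDensity n r :=
  indicator_nonneg (fun r (hr : 0 ≤ r) => by positivity) r

lemma measurable_ginibreRadialDensity (n : ℕ) : Measurable (ginibreRadialDensity n) :=
  Measurable.indicator (by fun_prop) measurableSet_Ici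

lemma hasSum_ginibreRadialDensity (r : ℝ) :
    HasSum (fun n => ginibreRadialDensity n r) ((Ici 0).indicator (fun r => 2 * r) r) := by
  by_cases hr : r ∈ Ici (0 : ℝ)
  · simp only [ginibreRadialDensity, indicator_of_mem hr]
    have hexp := (NormedSpace.expSeries_div_hasSum_exp (r ^ 2)).mul_left (2 * r * exp (-r ^ 2))
    rw [← exp_eq_exp_ℝ, mul_assoc _ (exp _), ← exp_add, neg_add_cancel, exp_zero, mul_one] at hexp
    refine hexp.congr_fun fun n => ?_
    rw [pow_add, pow_mul]
    ring
  · simpa only [ginibreRadialDensity, indicator_of_notMem hr] using hasSum_zero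

lemma integral_comp_eq_integral_density_mul {Ω α : Type*} [MeasurableSpace Ω]
    [MeasurableSpace α] {μ : Measure Ω} {ν : Measure α} {X : Ω → α} (hX : AEMeasurable X μ)
    {g : α → ℝ} (hg : Measurable g) (hg_nonneg : ∀ a, 0 ≤ g a)
    (hlaw : μ.map X = ν.withDensity (fun a => ENNReal.ofReal (g a)))
    {h : α → ℝ} (hh : Measurable h) :
    ∫ ω, h (X ω) ∂μ = ∫ a, g a * h a ∂ν := by
  rw [← integral_map hX hh.aestronglyMeasurable, hlaw,
    integral_withDensity_eq_integral_toReal_smul hg.ennreal_ofReal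
      (ae_of_all _ fun _ => ENNReal.ofReal_lt_top)]
  simp_rw [ENNReal.toReal_ofReal (hg_nonneg _), smul_eq_mul]

lemma hasSum_integral_mul_of_hasSum {ι α : Type*} [Countable ι] [MeasurableSpace α]
    {μ : Measure α} {g : ι → α → ℝ} {G h : α → ℝ} (hg : ∀ i, AEStronglyMeasurable (g i) μ)
    (hh : AEStronglyMeasurable h μ) (hg_nonneg : ∀ i a, 0 ≤ g i a)
    (hG : ∀ a, HasSum (fun i => g i a) (G a)) (hGh : Integrable (fun a => G a * h a) μ) :
    HasSum (fun i => ∫ a, g i a * h a ∂μ) (∫ a, G a * h a ∂μ) := by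
  have hbound : (fun a => ∑' i, g i a * ‖h a‖) = fun a => ‖G a * h a‖ := funext fun a => by
    rw [((hG a).mul_right _).tsum_eq, norm_mul,
      Real.norm_of_nonneg ((hG a).nonneg (hg_nonneg · a))]
  refine hasSum_integral_of_dominated_convergence (fun i a => g i a * ‖h a‖)
    (fun i => (hg i).mul hh)
    (fun i => ae_of_all _ fun a => by rw [norm_mul, Real.norm_of_nonneg (hg_nonneg i a)])
    (ae_of_all _ fun a => ((hG a).mul_right _).summable) (hbound ▸ hGh.norm)
    (ae_of_all _ fun a => (hG a).mul_right _)

section CompactSupport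

variable {X : Type*} [TopologicalSpace X] [MeasurableSpace X] {μ : Measure X}

lemma HasCompactSupport.integrable_of_bound {E : Type*} [NormedAddCommGroup E]
    [IsFiniteMeasureOnCompacts μ] {f : X → E} (hf : HasCompactSupport f)
    (hf_meas : AEStronglyMeasurable f μ) {C : ℝ} (hC : ∀ x, ‖f x‖ ≤ C) : Integrable f μ :=
  (integrableOn_iff_integrable_of_support_subset (subset_tsupport f)).1
    (Measure.integrableOn_of_bounded hf.isCompact.measure_ne_top hf_meas (ae_of_all _ hC))

lemma HasCompactSupport.integrable_continuous_mul [OpensMeasurableSpace X] [T2Space X]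
    {f g : X → ℝ} (hf_supp : HasCompactSupport f) (hf : Integrable f μ) (hg : Continuous g) :
    Integrable (fun x => g x * f x) μ :=
  (integrableOn_iff_integrable_of_support_subset
    ((Function.support_mul_subset_right _ _).trans (subset_tsupport f))).1
    (hf.integrableOn.continuousOn_mul hg.continuousOn hf_supp.isCompact)

end CompactSupport

lemma HasCompactSupport.eventually_setIntegral_Ioi_neg_eq_integral {E : Type*}
    [NormedAddCommGroup E] [NormedSpace ℝ E] {f : ℝ → E} (hf : HasCompactSupport f) :
    ∀ᶠ R in atTop, ∫ x in Ioi (-R), f x = ∫ x, f x := by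
  obtain ⟨b, hb⟩ := hf.isCompact.bddBelow
  filter_upwards [eventually_gt_atTop (-b)] with R hR
  refine setIntegral_eq_integral_of_forall_compl_eq_zero fun x hx =>
    image_eq_zero_of_notMem_tsupport fun hxs => hx ?_
  exact show -R < x by linarith [hb hxs]

lemma indicator_Ici_mul_comp_sub (f : ℝ → ℝ) (R : ℝ) :
    (fun r => (Ici 0).indicator (fun r => 2 * r) r * f (r - R)) =
      fun r => (Ici (-R)).indicator (fun x => 2 * R * f x + 2 * (x * f x)) (r - R) := by
  funext r
  by_cases hr : 0 ≤ r
  · rw [indicator_of_mem (show r ∈ Ici 0 from hr),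
      indicator_of_mem (show r - R ∈ Ici (-R) by simpa using hr)]
    ring
  · rw [indicator_of_notMem (show r ∉ Ici 0 from hr),
      indicator_of_notMem (show r - R ∉ Ici (-R) by simpa using hr), zero_mul]

lemma integral_indicator_Ici_mul_comp_sub {f : ℝ → ℝ} (hf : Integrable f)
    (hxf : Integrable fun x => x * f x) (R : ℝ) :
    Integrable (fun r => (Ici 0).indicator (fun r => 2 * r) r * f (r - R)) ∧
      ∫ r, (Ici 0).indicator (fun r => 2 * r) r * f (r - R) =
        2 * R * (∫ x in Ioi (-R), f x) + 2 * ∫ x in Ioi (-R), x * f x := by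
  have hsum : Integrable fun x => 2 * R * f x + 2 * (x * f x) :=
    (hf.const_mul _).add (hxf.const_mul 2)
  rw [indicator_Ici_mul_comp_sub]
  refine ⟨(hsum.indicator measurableSet_Ici).comp_sub_right R, ?_⟩
  rw [integral_sub_right_eq_self (fun x => (Ici (-R)).indicator _ x) R,
    integral_indicator measurableSet_Ici, integral_Ici_eq_integral_Ioi,
    integral_add (hf.integrableOn.const_mul _) (hxf.integrableOn.const_mul 2),
    integral_const_mul, integral_const_mul]

theorem hasSum_integral_comp_sub_of_ginibre {Ω : Type*} [MeasurableSpace Ω] {μ : Measure Ω}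
    {ρ : ℕ → Ω → ℝ} (hρ_meas : ∀ n, Measurable (ρ n))
    (hρ_law : ∀ n, μ.map (ρ n) = volume.withDensity
      (fun r => ENNReal.ofReal (ginibreRadialDensity n r)))
    {f : ℝ → ℝ} (hf_meas : Measurable f) (hf : Integrable f) (hxf : Integrable fun x => x * f x)
    (R : ℝ) :
    HasSum (fun n => ∫ ω, f (ρ n ω - R) ∂μ)
      (2 * R * (∫ x in Ioi (-R), f x) + 2 * ∫ x in Ioi (-R), x * f x) := by
  obtain ⟨hint, hintegral⟩ := integral_indicator_Ici_mul_comp_sub hf hxf R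
  have hlaw n : ∫ ω, f (ρ n ω - R) ∂μ = ∫ r, ginibreRadialDensity n r * f (r - R) :=
    integral_comp_eq_integral_density_mul (hρ_meas n).aemeasurable
      (measurable_ginibreRadialDensity n) (ginibreRadialDensity_nonneg n) (hρ_law n)
      (hf_meas.comp (measurable_sub_const R))
  simp_rw [hlaw, ← hintegral]
  exact hasSum_integral_mul_of_hasSum
    (fun n => (measurable_ginibreRadialDensity n).aestronglyMeasurable)
    (hf_meas.comp (measurable_sub_const R)).aestronglyMeasurable ginibreRadialDensity_nonneg
    hasSum_ginibreRadialDensity hint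

theorem stmt11_general
    {Ω : Type*} [MeasureSpace Ω]
    (ρ : ℕ → Ω → ℝ)
    (hρ_meas : ∀ n, Measurable (ρ n))
    (hρ_law : ∀ n : ℕ, (ℙ : Measure Ω).map (ρ n) =
      volume.withDensity (fun r => ENNReal.ofReal
        (Set.indicator (Set.Ici (0 : ℝ))
          (fun r => 2 * r ^ (2 * n + 1) * Real.exp (-r ^ 2) / (Nat.factorial n)) r)))
    (f : ℝ → ℝ) (hf_bdd : ∃ C, ∀ x, |f x| ≤ C)
    (hf_meas : Measurable f) (hf_supp : HasCompactSupport f) :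
    (∀ R : ℝ, 0 < R →
      (∑' n : ℕ, ∫ ω, f (ρ n ω - R) ∂ℙ) =
        2 * R * (∫ x in Set.Ioi (-R), f x) + 2 * ∫ x in Set.Ioi (-R), x * f x) ∧
    (∃ C > (0 : ℝ), ∃ R₀ : ℝ, ∀ R : ℝ, R₀ ≤ R →
      |(∑' n : ℕ, ∫ ω, f (ρ n ω - R) ∂ℙ) - 2 * R * ∫ x : ℝ, f x| ≤ C) := by
  obtain ⟨C, hC⟩ := hf_bdd
  have hf : Integrable f := hf_supp.integrable_of_bound hf_meas.aestronglyMeasurable hC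
  have hxf : Integrable fun x => x * f x := hf_supp.integrable_continuous_mul hf continuous_id
  have identity R := (hasSum_integral_comp_sub_of_ginibre hρ_meas hρ_law hf_meas hf hxf R).tsum_eq
  refine ⟨fun R _ => identity R, |2 * ∫ x, x * f x| + 1, by positivity, ?_⟩
  have hxf_supp : HasCompactSupport fun x => x * f x := hf_supp.mul_left (f := id)
  obtain ⟨R₀, hR₀⟩ := eventually_atTop.1
    (hf_supp.eventually_setIntegral_Ioi_neg_eq_integral.and
      hxf_supp.eventually_setIntegral_Ioi_neg_eq_integral)
  refine ⟨R₀, fun R hR => ?_⟩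
  obtain ⟨hf_eq, hxf_eq⟩ := hR₀ R hR
  rw [identity, hf_eq, hxf_eq, add_sub_cancel_left]
  linarith [le_abs_self (2 * ∫ x, x * f x)]

/-- exact expected-value identity for the Ginibre ensemble:
for every `R > 0`,
`∑_n E[f(ρ_n − R)] = 2 R ∫_{−R}^{∞} f(x) dx + 2 ∫_{−R}^{∞} x f(x) dx`,
and in particular `∑_n E[f(ρ_n − R)] = 2 R ∫_ℝ f + O(1)` as `R → +∞`. -/
theorem stmt11
    {Ω : Type*} [MeasureSpace Ω] [IsProbabilityMeasure (ℙ : Measure Ω)]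
    (ρ : ℕ → Ω → ℝ)
    (hρ_meas : ∀ n, Measurable (ρ n))
    (hρ_nonneg : ∀ n, ∀ ω, 0 ≤ ρ n ω)
    (hρ_indep : iIndepFun ρ ℙ)
    (hρ_law : ∀ n : ℕ, (ℙ : Measure Ω).map (ρ n) =
      volume.withDensity (fun r => ENNReal.ofReal
        (Set.indicator (Set.Ici (0 : ℝ))
          (fun r => 2 * r ^ (2 * n + 1) * Real.exp (-r ^ 2) / (Nat.factorial n)) r)))
    (f : ℝ → ℝ) (hf_bdd : ∃ C, ∀ x, |f x| ≤ C)
    (hf_meas : Measurable f) (hf_supp : HasCompactSupport f) :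
    (∀ R : ℝ, 0 < R →
      (∑' n : ℕ, ∫ ω, f (ρ n ω - R) ∂ℙ) =
        2 * R * (∫ x in Set.Ioi (-R), f x) + 2 * ∫ x in Set.Ioi (-R), x * f x) ∧
    (∃ C > (0 : ℝ), ∃ R₀ : ℝ, ∀ R : ℝ, R₀ ≤ R →
      |(∑' n : ℕ, ∫ ω, f (ρ n ω - R) ∂ℙ) - 2 * R * ∫ x : ℝ, f x| ≤ C) :=
  stmt11_general ρ hρ_meas hρ_law f hf_bdd hf_meas hf_supp
end

section
/- Fix α>0 and T > 0. Then sup_{n≥0} P(e^R·(h(ρ_n^{(α)}) − R) ∈ [−T,T]) = O(e^{−R}) as R → +∞; that is, there exist constants C > 0 and R_0 such that for all R ≥ R_0 and all n ≥ 0, P(e^R·(h(ρ_n^{(α)}) − R) ∈ [−T,T]) ≤ C·e^{−R}. -/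
/-!
The density of `ρ_n` is at most `K / (1 - r²)` with `K` depending only on `α`, not on `n`: since
`s^(2n+1)` is increasing and `1 - s²` varies by at most a factor 2 on `[r, r + (1 - r²)/4]`, the
density there is at least a fixed fraction of its value at `r`, while the total mass is `1`.
As `h(r) = 2 artanh r` has derivative `2 / (1 - r²)`, the variable `h(ρ_n)` then has density at
most `K / 2`, so it falls in `[R - T e^{-R}, R + T e^{-R}]` with probability at most `K T e^{-R}`.
-/

open MeasureTheory ProbabilityTheory Filter Real

open Set

theorem Real.hasDerivAt_tanh (x : ℝ) : HasDerivAt tanh (1 - tanh x ^ 2) x := by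
  rw [show tanh = sinh / cosh from funext tanh_eq_sinh_div_cosh]
  refine ((hasDerivAt_sinh x).div (hasDerivAt_cosh x) (cosh_pos x).ne').congr_deriv ?_
  have := (cosh_pos x).ne'
  rw [Pi.div_apply]
  field_simp

theorem Real.image_tanh_Icc (a b : ℝ) :
    tanh '' Icc a b = Ioo (-1) 1 ∩ artanh ⁻¹' Icc a b := by
  ext r
  constructor
  · rintro ⟨x, hx, rfl⟩
    exact ⟨⟨neg_one_lt_tanh x, tanh_lt_one x⟩, by simpa [artanh_tanh] using hx⟩
  · rintro ⟨hr₁, hr⟩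
    exact ⟨artanh r, hr, tanh_artanh hr₁⟩

theorem setLIntegral_ofReal_div_one_sub_sq_preimage_artanh {K : ℝ} (hK : 0 ≤ K) (a b : ℝ) :
    ∫⁻ r in Ioo (-1) 1 ∩ artanh ⁻¹' Icc a b, ENNReal.ofReal (K / (1 - r ^ 2))
      = ENNReal.ofReal (K * (b - a)) := by
  rw [← image_tanh_Icc, lintegral_image_eq_lintegral_abs_deriv_mul measurableSet_Icc
    (fun x _ => (hasDerivAt_tanh x).hasDerivWithinAt) tanh_injective.injOn]
  have hJ : EqOn (fun x => ENNReal.ofReal |1 - tanh x ^ 2| * ENNReal.ofReal (K / (1 - tanh x ^ 2)))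
      (fun _ => ENNReal.ofReal K) (Icc a b) := by
    intro x _
    have h : 0 < 1 - tanh x ^ 2 := sub_pos.mpr (tanh_sq_lt_one x)
    dsimp only
    rw [abs_of_pos h, ← ENNReal.ofReal_mul h.le, mul_div_cancel₀ _ h.ne']
  rw [setLIntegral_congr_fun measurableSet_Icc hJ, setLIntegral_const, Real.volume_Icc,
    ← ENNReal.ofReal_mul hK]

theorem mul_rpow_le_rpow_of_mem_Icc_half {t x : ℝ} (p : ℝ) (ht : 0 < t)
    (hx : x ∈ Icc (t / 2) t) :
    min 1 (2 ^ (-p)) * t ^ p ≤ x ^ p := by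
  have htp : 0 ≤ t ^ p := rpow_nonneg ht.le p
  rcases le_or_gt 0 p with hp | hp
  · calc min 1 (2 ^ (-p)) * t ^ p ≤ 2 ^ (-p) * t ^ p := by gcongr; exact min_le_right _ _
      _ = (t / 2) ^ p := by rw [div_rpow ht.le zero_le_two, rpow_neg zero_le_two]; ring
      _ ≤ x ^ p := rpow_le_rpow (by positivity) hx.1 hp
  · calc min 1 (2 ^ (-p)) * t ^ p ≤ 1 * t ^ p := by gcongr; exact min_le_left _ _
      _ = t ^ p := one_mul _
      _ ≤ x ^ p := rpow_le_rpow_of_nonpos (by linarith [hx.1]) hx.2 hp.le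

theorem mul_le_one_of_lintegral_le_one_of_le_on_Icc {f : ℝ → ℝ}
    (hf : ∫⁻ s, ENNReal.ofReal (f s) ≤ 1) {a ℓ L : ℝ} (hℓ : 0 ≤ ℓ)
    (hL : ∀ s ∈ Icc a (a + ℓ), L ≤ f s) : L * ℓ ≤ 1 := by
  rcases le_or_gt L 0 with hL₀ | hL₀
  · nlinarith
  refine ENNReal.ofReal_le_one.mp ?_
  calc ENNReal.ofReal (L * ℓ) = ∫⁻ _ in Icc a (a + ℓ), ENNReal.ofReal L := by
        rw [setLIntegral_const, Real.volume_Icc, add_sub_cancel_left, ENNReal.ofReal_mul hL₀.le]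
    _ ≤ ∫⁻ s in Icc a (a + ℓ), ENNReal.ofReal (f s) :=
        setLIntegral_mono' measurableSet_Icc fun s hs => ENNReal.ofReal_le_ofReal (hL s hs)
    _ ≤ ∫⁻ s, ENNReal.ofReal (f s) := setLIntegral_le_lintegral _ _
    _ ≤ 1 := hf

theorem mul_pow_mul_rpow_le_of_lintegral_le_one {c p : ℝ} {k : ℕ} (hc : 0 ≤ c)
    (hf : ∫⁻ s, ENNReal.ofReal ((Icc 0 1).indicator (fun s => c * s ^ k * (1 - s ^ 2) ^ p) s)
      ≤ 1)
    {r : ℝ} (hr₀ : 0 ≤ r) (hr₁ : r < 1) :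
    c * r ^ k * (1 - r ^ 2) ^ p ≤ 4 / min 1 (2 ^ (-p)) / (1 - r ^ 2) := by
  set t := 1 - r ^ 2
  set m : ℝ := min 1 (2 ^ (-p))
  have ht : 0 < t := by nlinarith
  have hcomp : ∀ s ∈ Icc r (r + t / 4),
      m * (c * r ^ k * t ^ p) ≤ (Icc 0 1).indicator (fun s => c * s ^ k * (1 - s ^ 2) ^ p) s := by
    rintro s ⟨hrs, hst⟩
    have hs₀ : 0 ≤ s := hr₀.trans hrs
    have hs₁ : (1 - r) / 2 ≤ 1 - s := by nlinarith
    have hs' : 1 - s ^ 2 ∈ Icc (t / 2) t := ⟨by nlinarith, by nlinarith⟩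
    rw [indicator_of_mem (show s ∈ Icc (0 : ℝ) 1 from ⟨hs₀, by linarith⟩)]
    calc m * (c * r ^ k * t ^ p) = c * r ^ k * (m * t ^ p) := by ring
      _ ≤ c * s ^ k * (1 - s ^ 2) ^ p :=
          mul_le_mul (by gcongr) (mul_rpow_le_rpow_of_mem_Icc_half p ht hs')
            (by positivity) (by positivity)
  have key := mul_le_one_of_lintegral_le_one_of_le_on_Icc hf (by positivity) hcomp
  have hm : 0 < m := lt_min one_pos (rpow_pos_of_pos two_pos _)
  rw [div_div, le_div_iff₀ (by positivity)]
  linarith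

theorem ae_ofReal_indicator_le_of_lintegral_le_one {c p : ℝ} {k : ℕ} (hc : 0 ≤ c)
    (hf : ∫⁻ s, ENNReal.ofReal ((Icc 0 1).indicator (fun s => c * s ^ k * (1 - s ^ 2) ^ p) s)
      ≤ 1) :
    ∀ᵐ r, ENNReal.ofReal ((Icc 0 1).indicator (fun s => c * s ^ k * (1 - s ^ 2) ^ p) r) ≤
      (Ioo (-1) 1).indicator (fun r => ENNReal.ofReal (4 / min 1 (2 ^ (-p)) / (1 - r ^ 2))) r := by
  filter_upwards [volume.ae_ne 1] with r hr
  by_cases hr₀₁ : r ∈ Icc 0 1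
  · have hr₁ : r < 1 := lt_of_le_of_ne hr₀₁.2 hr
    have hr : r ∈ Ioo (-1 : ℝ) 1 := ⟨by linarith [hr₀₁.1], hr₁⟩
    rw [indicator_of_mem hr₀₁, indicator_of_mem hr]
    exact ENNReal.ofReal_le_ofReal (mul_pow_mul_rpow_le_of_lintegral_le_one hc hf hr₀₁.1 hr₁)
  · simp [indicator_of_notMem hr₀₁]

theorem Ioo_inter_setOf_mul_log_sub_mem_Icc {c : ℝ} (hc : 0 < c) (R T : ℝ) :
    Ioo (-1) 1 ∩ {r : ℝ | c * (log ((1 + r) / (1 - r)) - R) ∈ Icc (-T) T} =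
      Ioo (-1) 1 ∩ artanh ⁻¹' Icc ((R - T / c) / 2) ((R + T / c) / 2) := by
  ext r
  simp only [mem_inter_iff, mem_preimage, and_congr_right_iff]
  intro hr
  rw [artanh_eq_half_log (Ioo_subset_Icc_self hr)]
  have hTc : c * (T / c) = T := mul_div_cancel₀ T hc.ne'
  simp only [mem_Icc, Set.mem_ofPred_eq]
  constructor <;> rintro ⟨h₁, h₂⟩ <;> constructor <;> nlinarith

theorem stmt14_general
    {Ω : Type*} [MeasureSpace Ω] [IsProbabilityMeasure (ℙ : Measure Ω)]
    (α : ℝ) (hα : 0 < α) (T : ℝ) (hT : 0 < T)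
    (ρ : ℕ → Ω → ℝ)
    (hρ_meas : ∀ n, Measurable (ρ n))
    (hρ_law : ∀ n : ℕ, (ℙ : Measure Ω).map (ρ n) =
      volume.withDensity (fun r => ENNReal.ofReal
        (Set.indicator (Set.Icc (0 : ℝ) 1)
          (fun r => 2 * (Real.Gamma (α + n + 1) / (Real.Gamma α * Real.Gamma (n + 1))) *
            r ^ (2 * n + 1) * (1 - r ^ 2) ^ (α - 1)) r)))  :
    ∃ C > (0 : ℝ), ∃ R₀ : ℝ, ∀ R : ℝ, R₀ ≤ R → ∀ n : ℕ,
      (ℙ {ω : Ω | Real.exp R * (Real.log ((1 + ρ n ω) / (1 - ρ n ω)) - R)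
          ∈ Set.Icc (-T) T}).toReal ≤ C * Real.exp (-R) := by
  set K : ℝ := 4 / min 1 (2 ^ (-(α - 1)))
  have hK : 0 < K := by positivity
  refine ⟨K * T, by positivity, 0, fun R _ n => ?_⟩
  have hc : 0 ≤ 2 * (Gamma (α + n + 1) / (Gamma α * Gamma (n + 1))) := by
    have := Gamma_pos_of_pos hα
    have := Gamma_pos_of_pos (by positivity : 0 < α + n + 1)
    have := Gamma_pos_of_pos (by positivity : (0 : ℝ) < n + 1)
    positivity
  have := Measure.isProbabilityMeasure_map (μ := (ℙ : Measure Ω)) (hρ_meas n).aemeasurable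
  have hmass := measure_univ (μ := (ℙ : Measure Ω).map (ρ n))
  rw [hρ_law n, withDensity_apply _ MeasurableSet.univ, Measure.restrict_univ] at hmass
  set S := {r : ℝ | exp R * (log ((1 + r) / (1 - r)) - R) ∈ Icc (-T) T}
  have hS : MeasurableSet S := measurableSet_Icc.preimage (by fun_prop)
  refine ENNReal.toReal_le_of_le_ofReal (by positivity) ?_
  calc ℙ (ρ n ⁻¹' S) = (ℙ : Measure Ω).map (ρ n) S :=
        (Measure.map_apply (hρ_meas n) hS).symm
    _ ≤ ∫⁻ r in S, (Ioo (-1) 1).indicator (fun r => ENNReal.ofReal (K / (1 - r ^ 2))) r := by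
        rw [hρ_law n, withDensity_apply _ hS]
        exact lintegral_mono_ae (ae_restrict_of_ae
          (ae_ofReal_indicator_le_of_lintegral_le_one hc hmass.le))
    _ = ENNReal.ofReal (K * ((R + T / exp R) / 2 - (R - T / exp R) / 2)) := by
        rw [setLIntegral_indicator measurableSet_Ioo,
          Ioo_inter_setOf_mul_log_sub_mem_Icc (exp_pos R),
          setLIntegral_ofReal_div_one_sub_sq_preimage_artanh hK.le]
    _ = ENNReal.ofReal (K * T * exp (-R)) := by
        rw [exp_neg]; ring_nf

/-- uniform smallness for the hyperbolic ensemble: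
`sup_n P(e^R (h(ρ_n) − R) ∈ [−T, T]) = O(e^{−R})` as `R → +∞`. -/
theorem stmt14
    {Ω : Type*} [MeasureSpace Ω] [IsProbabilityMeasure (ℙ : Measure Ω)]
    (α : ℝ) (hα : 0 < α) (T : ℝ) (hT : 0 < T)
    (ρ : ℕ → Ω → ℝ)
    (hρ_meas : ∀ n, Measurable (ρ n))
    (hρ_range : ∀ n, ∀ ω, ρ n ω ∈ Set.Icc (0 : ℝ) 1)
    (hρ_indep : iIndepFun ρ ℙ)
    (hρ_law : ∀ n : ℕ, (ℙ : Measure Ω).map (ρ n) =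
      volume.withDensity (fun r => ENNReal.ofReal
        (Set.indicator (Set.Icc (0 : ℝ) 1)
          (fun r => 2 * (Real.Gamma (α + n + 1) / (Real.Gamma α * Real.Gamma (n + 1))) *
            r ^ (2 * n + 1) * (1 - r ^ 2) ^ (α - 1)) r)))  :
    ∃ C > (0 : ℝ), ∃ R₀ : ℝ, ∀ R : ℝ, R₀ ≤ R → ∀ n : ℕ,
      (ℙ {ω : Ω | Real.exp R * (Real.log ((1 + ρ n ω) / (1 - ρ n ω)) - R)
          ∈ Set.Icc (-T) T}).toReal ≤ C * Real.exp (-R) :=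
  stmt14_general α hα T hT ρ hρ_meas hρ_law
end

section
/- Fix T > 0. Then sup_{n≥0} P(R·(ρ_n − R) ∈ [−T,T]) = O(R^{−1}) as R → +∞; that is, there exist constants C > 0 and R_0 such that for all R ≥ R_0 and all n ≥ 0, P(R·(ρ_n − R) ∈ [−T,T]) ≤ C/R. -/
/-!
The event `R (ρ_n − R) ∈ [−T, T]` is `ρ_n ∈ [R − T/R, R + T/R]`, an interval of length `2T/R`,
so it suffices that the densities `2 r^{2n+1} e^{−r²} / n!` are bounded by `2` uniformly in `n`.
Writing `r^{2n+1} = (r²)^{n+1/2}`, this is `x^a e^{−x} ≤ a^a e^{−a} ≤ n!` for `a = n + 1/2`,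
where the last step is Stirling's lower bound for `n!`.
-/

open MeasureTheory ProbabilityTheory Real

theorem rpow_mul_exp_neg_le {a x : ℝ} (ha : 0 < a) (hx : 0 ≤ x) :
    x ^ a * exp (-x) ≤ a ^ a * exp (-a) := by
  have hxa : x / a ≤ exp (x / a - 1) := by linarith [add_one_le_exp (x / a - 1)]
  calc x ^ a * exp (-x) = a ^ a * ((x / a) ^ a * exp (-x)) := by
        rw [div_rpow hx ha.le]; field_simp
    _ ≤ a ^ a * (exp (x / a - 1) ^ a * exp (-x)) := by gcongr
    _ = a ^ a * exp (-a) := by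
        rw [← exp_mul, ← exp_add]; congr 2; field_simp; ring

theorem add_half_rpow_mul_exp_neg_le_factorial (n : ℕ) :
    ((n : ℝ) + 1 / 2) ^ ((n : ℝ) + 1 / 2) * exp (-((n : ℝ) + 1 / 2)) ≤ n.factorial := by
  obtain rfl | hn := eq_or_ne n 0
  · norm_num
    exact mul_le_one₀ (rpow_le_one (by norm_num) (by norm_num) (by norm_num))
      (exp_nonneg _) (exp_le_one_iff.mpr (by norm_num))
  set a : ℝ := n + 1 / 2
  have hn' : (1 : ℝ) ≤ n := by exact_mod_cast Nat.one_le_iff_ne_zero.mpr hn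
  have ha : 0 < a := by positivity
  rw [← log_le_log_iff (by positivity) (by exact_mod_cast n.factorial_pos), log_mul
    (rpow_pos_of_pos ha a).ne' (exp_pos _).ne', log_rpow ha, log_exp]
  have hlog : log a ≤ log n + 1 / (2 * n) := by
    have hle := log_le_sub_one_of_pos (show 0 < a / n by positivity)
    have hratio : a / n - 1 = 1 / (2 * n) := by field_simp; ring
    rw [log_div ha.ne' (by positivity), hratio] at hle
    linarith
  have hlog2pi : 1 ≤ log (2 * π) := by
    rw [le_log_iff_exp_le (by positivity)]
    linarith [exp_one_lt_d9, pi_gt_three]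
  have hstirling := Stirling.le_log_factorial_stirling hn
  have hsplit : a * (log n + 1 / (2 * n)) = n * log n + log n / 2 + 1 / 2 + 1 / (4 * n) := by
    field_simp; ring
  have hquarter : 1 / (4 * (n : ℝ)) ≤ 1 / 4 := by
    rw [div_le_div_iff₀ (by positivity) (by norm_num)]; linarith
  -- `a log a − a` exceeds Stirling's `n log n − n + (log n)/2` by at most `1/(4n) ≤ log(2π)/2`.
  linarith [mul_le_mul_of_nonneg_left hlog ha.le, show a = n + 1 / 2 from rfl]

theorem pow_mul_exp_neg_sq_le_factorial (n : ℕ) {r : ℝ} (hr : 0 ≤ r) :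
    r ^ (2 * n + 1) * exp (-r ^ 2) ≤ n.factorial := by
  have hpow : r ^ (2 * n + 1) = (r ^ 2) ^ ((n : ℝ) + 1 / 2) := by
    rw [← rpow_natCast_mul hr, ← rpow_natCast]; push_cast; ring_nf
  rw [hpow]
  exact (rpow_mul_exp_neg_le (by positivity) (sq_nonneg r)).trans
    (add_half_rpow_mul_exp_neg_le_factorial n)

theorem ginibre_density_le_two (n : ℕ) (r : ℝ) :
    Set.indicator (Set.Ici (0 : ℝ))
      (fun r => 2 * r ^ (2 * n + 1) * exp (-r ^ 2) / (Nat.factorial n)) r ≤ 2 := by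
  refine Set.indicator_apply_le' (fun hr => ?_) (fun _ => zero_le_two)
  rw [div_le_iff₀ (by exact_mod_cast n.factorial_pos), mul_assoc]
  linarith [pow_mul_exp_neg_sq_le_factorial n (Set.mem_Ici.mp hr)]

theorem measure_preimage_le_of_map_eq_withDensity {Ω : Type*} [MeasurableSpace Ω]
    {μ : Measure Ω} {X : Ω → ℝ} (hX : Measurable X) {f : ℝ → ℝ} {M : ℝ} (hf : ∀ x, f x ≤ M)
    (hlaw : μ.map X = volume.withDensity (fun x => ENNReal.ofReal (f x)))
    {s : Set ℝ} (hs : MeasurableSet s) :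
    μ (X ⁻¹' s) ≤ ENNReal.ofReal M * volume s := by
  rw [← Measure.map_apply hX hs, hlaw, withDensity_apply _ hs, ← setLIntegral_const]
  exact lintegral_mono fun x => ENNReal.ofReal_le_ofReal (hf x)

theorem mul_sub_self_mem_Icc_iff {R T x : ℝ} (hR : 0 < R) :
    R * (x - R) ∈ Set.Icc (-T) T ↔ x ∈ Set.Icc (R - T / R) (R + T / R) := by
  simp only [Set.mem_Icc, ← le_div_iff₀' hR, ← div_le_iff₀' hR, neg_div]
  constructor <;> rintro ⟨h₁, h₂⟩ <;> constructor <;> linarith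

theorem stmt16_general
    {Ω : Type*} [MeasureSpace Ω]
    (T : ℝ) (hT : 0 < T)
    (ρ : ℕ → Ω → ℝ)
    (hρ_meas : ∀ n, Measurable (ρ n))
    (hρ_law : ∀ n : ℕ, (ℙ : Measure Ω).map (ρ n) =
      volume.withDensity (fun r => ENNReal.ofReal
        (Set.indicator (Set.Ici (0 : ℝ))
          (fun r => 2 * r ^ (2 * n + 1) * Real.exp (-r ^ 2) / (Nat.factorial n)) r))) :
    ∃ C > (0 : ℝ), ∃ R₀ : ℝ, ∀ R : ℝ, R₀ ≤ R → ∀ n : ℕ,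
      (ℙ {ω : Ω | R * (ρ n ω - R) ∈ Set.Icc (-T) T}).toReal ≤ C / R := by
  refine ⟨4 * T, by positivity, 1, fun R hR n => ?_⟩
  have hR : 0 < R := by linarith
  have hevent : {ω : Ω | R * (ρ n ω - R) ∈ Set.Icc (-T) T} =
      ρ n ⁻¹' Set.Icc (R - T / R) (R + T / R) :=
    Set.ext fun _ => mul_sub_self_mem_Icc_iff hR
  have hprob := measure_preimage_le_of_map_eq_withDensity (hρ_meas n)
    (ginibre_density_le_two n) (hρ_law n) (measurableSet_Icc (a := R - T / R) (b := R + T / R))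
  rw [hevent]
  refine ENNReal.toReal_le_of_le_ofReal (by positivity) (hprob.trans_eq ?_)
  rw [Real.volume_Icc, ← ENNReal.ofReal_mul zero_le_two]
  congr 1; ring

/-- uniform smallness for the Ginibre ensemble:
`sup_n P(R (ρ_n − R) ∈ [−T, T]) = O(R^{−1})` as `R → +∞`. -/
theorem stmt16
    {Ω : Type*} [MeasureSpace Ω] [IsProbabilityMeasure (ℙ : Measure Ω)]
    (T : ℝ) (hT : 0 < T)
    (ρ : ℕ → Ω → ℝ)
    (hρ_meas : ∀ n, Measurable (ρ n))
    (hρ_nonneg : ∀ n, ∀ ω, 0 ≤ ρ n ω)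
    (hρ_indep : iIndepFun ρ ℙ)
    (hρ_law : ∀ n : ℕ, (ℙ : Measure Ω).map (ρ n) =
      volume.withDensity (fun r => ENNReal.ofReal
        (Set.indicator (Set.Ici (0 : ℝ))
          (fun r => 2 * r ^ (2 * n + 1) * Real.exp (-r ^ 2) / (Nat.factorial n)) r))) :
    ∃ C > (0 : ℝ), ∃ R₀ : ℝ, ∀ R : ℝ, R₀ ≤ R → ∀ n : ℕ,
      (ℙ {ω : Ω | R * (ρ n ω - R) ∈ Set.Icc (-T) T}).toReal ≤ C / R :=
  stmt16_general T hT ρ hρ_meas hρ_law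
end
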